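/- Let d, s, N be positive natural numbers with s ≤ d, for each i ∈ {1,…,N} let τ_i : Fin s → Fin d be an injection, and assume the ranges of τ_1,…,τ_N cover Fin d. Let t > 0, σ > 0, and m ∈ ℝ^s. Then the function x ↦ ∏_{i=1}^N ∏_{j=1}^s ((2πσ²)^{−1/2} exp(−(x_{τ_i(j)} − m_j)²/(2σ²)))^t is integrable over Fin d → ℝ with respect to Lebesgue measure, and its integral equals ∏_{k=1}^d ∫_ℝ ∏_{(i,j): τ_i(j)=k} ((2πσ²)^{−1/2} exp(−(u − m_j)²/(2σ²)))^t du. -/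

import Mathlib

/-!
Grouping the factors of the integrand by the pixel `k = τ i j` they read writes it as
`∏ k, f k (x k)` with one function of one variable per pixel, so Fubini on `Fin d → ℝ` factors
the integral. Each `f k` is integrable: by the covering assumption it contains at least one
factor, a power of a Gaussian and hence integrable, and every other factor is bounded by a power
of the peak value `(2πσ²)^(-1/2)`.
-/

open MeasureTheory

/-- The one-dimensional Gaussian density with mean `m` and variance `σ²`. -/
noncomputable def gauss1D (σ m u : ℝ) : ℝ :=
  (2 * Real.pi * σ ^ 2) ^ (-(1 : ℝ) / 2) * Real.exp (-(u - m) ^ 2 / (2 * σ ^ 2))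

lemma Finset.prod_prod_eq_prod_fiberwise {α β γ M : Type*} [Fintype α] [Fintype β]
    [Fintype γ] [DecidableEq γ] [CommMonoid M] (τ : α → β → γ) (g : α → β → γ → M) :
    ∏ i, ∏ j, g i j (τ i j) =
      ∏ k, ∏ p ∈ univ.filter (fun p : α × β => τ p.1 p.2 = k), g p.1 p.2 k := by
  rw [← prod_product', univ_product_univ, ← prod_fiberwise univ (fun p : α × β => τ p.1 p.2)]
  refine prod_congr rfl fun k _ => prod_congr rfl fun p hp => ?_
  rw [(mem_filter.mp hp).2]

theorem MeasureTheory.Integrable.finset_prod_of_bounded {α ι : Type*} [MeasurableSpace α]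
    {μ : Measure α} {S : Finset ι} {f : ι → α → ℝ} {p₀ : ι} {C : ℝ} (hp₀ : p₀ ∈ S)
    (hint : Integrable (f p₀) μ) (hmeas : ∀ p ∈ S, AEStronglyMeasurable (f p) μ)
    (hbdd : ∀ p ∈ S, ∀ x, ‖f p x‖ ≤ C) :
    Integrable (fun x => ∏ p ∈ S, f p x) μ := by
  classical
  simp_rw [← Finset.prod_erase_mul S _ hp₀]
  refine hint.bdd_mul (c := C ^ (S.erase p₀).card)
    (Finset.aestronglyMeasurable_fun_prod _ fun p hp => hmeas p (Finset.mem_of_mem_erase hp)) ?_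
  refine ae_of_all _ fun x => ?_
  rw [norm_prod, ← Finset.prod_const]
  exact Finset.prod_le_prod (fun _ _ => norm_nonneg _)
    fun p hp => hbdd p (Finset.mem_of_mem_erase hp) x

lemma gauss1D_nonneg (σ m u : ℝ) : 0 ≤ gauss1D σ m u := by
  unfold gauss1D
  positivity

lemma gauss1D_le (σ m u : ℝ) : gauss1D σ m u ≤ (2 * Real.pi * σ ^ 2) ^ (-(1 : ℝ) / 2) := by
  refine mul_le_of_le_one_right (by positivity) (Real.exp_le_one_iff.mpr ?_)
  exact div_nonpos_of_nonpos_of_nonneg (neg_nonpos_of_nonneg (sq_nonneg _)) (by positivity)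

lemma continuous_gauss1D (σ m : ℝ) : Continuous (gauss1D σ m) := by
  unfold gauss1D
  fun_prop

lemma gauss1D_rpow_eq (σ t m u : ℝ) :
    gauss1D σ m u ^ t = ((2 * Real.pi * σ ^ 2) ^ (-(1 : ℝ) / 2)) ^ t *
      Real.exp (-(t / (2 * σ ^ 2)) * (u - m) ^ 2) := by
  unfold gauss1D
  rw [Real.mul_rpow (by positivity) (Real.exp_pos _).le, ← Real.exp_mul]
  ring_nf

lemma integrable_gauss1D_rpow {σ t : ℝ} (hσ : σ ≠ 0) (ht : 0 < t) (m : ℝ) :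
    Integrable (fun u => gauss1D σ m u ^ t) := by
  simp_rw [gauss1D_rpow_eq]
  exact ((integrable_exp_neg_mul_sq (by positivity)).comp_sub_right m).const_mul _

lemma integrable_finset_prod_gauss1D_rpow {ι : Type*} {σ t : ℝ} {S : Finset ι} (hS : S.Nonempty)
    (hσ : σ ≠ 0) (ht : 0 < t) (m : ι → ℝ) :
    Integrable (fun u => ∏ p ∈ S, gauss1D σ (m p) u ^ t) := by
  obtain ⟨p₀, hp₀⟩ := hS
  refine Integrable.finset_prod_of_bounded (C := ((2 * Real.pi * σ ^ 2) ^ (-(1 : ℝ) / 2)) ^ t)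
    hp₀ (integrable_gauss1D_rpow hσ ht (m p₀))
    (fun p _ => ((continuous_gauss1D σ (m p)).rpow_const fun _ => .inr ht.le).aestronglyMeasurable)
    fun p _ u => ?_
  rw [Real.norm_of_nonneg (Real.rpow_nonneg (gauss1D_nonneg _ _ _) _)]
  exact Real.rpow_le_rpow (gauss1D_nonneg _ _ _) (gauss1D_le _ _ _) ht.le

theorem stmt_8_general (d s N : ℕ)
    (τ : Fin N → Fin s → Fin d)
    (hcover : ∀ k : Fin d, ∃ i j, τ i j = k)
    (t σ : ℝ) (ht : 0 < t) (hσ : 0 < σ) (m : Fin s → ℝ) :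
    Integrable
        (fun x : Fin d → ℝ => ∏ i : Fin N, ∏ j : Fin s, gauss1D σ (m j) (x (τ i j)) ^ t)
        volume ∧
      (∫ x : Fin d → ℝ, ∏ i : Fin N, ∏ j : Fin s, gauss1D σ (m j) (x (τ i j)) ^ t)
        = ∏ k : Fin d,
            ∫ u : ℝ,
              ∏ p ∈ Finset.univ.filter (fun p : Fin N × Fin s => τ p.1 p.2 = k),
                gauss1D σ (m p.2) u ^ t := by
  set f : Fin d → ℝ → ℝ := fun k u =>
    ∏ p ∈ Finset.univ.filter (fun p : Fin N × Fin s => τ p.1 p.2 = k), gauss1D σ (m p.2) u ^ t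
  have hregroup : (fun x : Fin d → ℝ => ∏ i, ∏ j, gauss1D σ (m j) (x (τ i j)) ^ t) =
      fun x => ∏ k, f k (x k) :=
    funext fun x => Finset.prod_prod_eq_prod_fiberwise τ fun _ j k => gauss1D σ (m j) (x k) ^ t
  have hf (k : Fin d) : Integrable (f k) := by
    obtain ⟨i, j, hij⟩ := hcover k
    exact integrable_finset_prod_gauss1D_rpow ⟨(i, j), by simpa using hij⟩ hσ.ne' ht _
  rw [hregroup]
  exact ⟨Integrable.fintype_prod hf, integral_fintype_prod_volume_eq_prod f⟩

/-- with patch-extraction injections `τ i : Fin s → Fin d` whose ranges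
cover `Fin d`, the function `x ↦ ∏ i ∏ j (gauss1D σ (m j) (x (τ i j)))^t` is
integrable on `ℝ^d`, and its integral factors over the pixels:
`∏ k ∫_ℝ ∏_{(i,j) : τ i j = k} (gauss1D σ (m j) u)^t du`. -/
theorem stmt_8 (d s N : ℕ) (hd : 0 < d) (hs : 0 < s) (hN : 0 < N) (hsd : s ≤ d)
    (τ : Fin N → Fin s → Fin d) (hτ : ∀ i, Function.Injective (τ i))
    (hcover : ∀ k : Fin d, ∃ i j, τ i j = k)
    (t σ : ℝ) (ht : 0 < t) (hσ : 0 < σ) (m : Fin s → ℝ) :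
    Integrable
        (fun x : Fin d → ℝ => ∏ i : Fin N, ∏ j : Fin s, gauss1D σ (m j) (x (τ i j)) ^ t)
        volume ∧
      (∫ x : Fin d → ℝ, ∏ i : Fin N, ∏ j : Fin s, gauss1D σ (m j) (x (τ i j)) ^ t)
        = ∏ k : Fin d,
            ∫ u : ℝ,
              ∏ p ∈ Finset.univ.filter (fun p : Fin N × Fin s => τ p.1 p.2 = k),
                gauss1D σ (m p.2) u ^ t :=
  stmt_8_general d s N τ hcover t σ ht hσ m
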